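/- arXiv:1912.11118 — 4 statements merged into one kernel-verified Lean document; each statement's English description precedes it below -/
import Mathlib

section
/- The ElGamal zero-test is correct: for any t, m : ZMod r, the ciphertext (R, C) = (g^t, g^m * U^t) satisfies C = R^u if and only if m = 0. -/
/-! Since `g ^ r = 1`, the map `a ↦ g ^ a.val` turns addition and multiplication in `ZMod r`
into multiplication and powering in `G`. The test `C = R ^ u` thus reads
`g ^ (m + t * u).val = g ^ (t * u).val`, and injectivity of the generator map leaves `m = 0`. -/

section ZModExponent

variable {M : Type*} [Monoid M] {n : ℕ} {g : M}

theorem pow_zmod_val_add [NeZero n] (hg : g ^ n = 1) (a b : ZMod n) :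
    g ^ (a + b).val = g ^ a.val * g ^ b.val := by
  rw [ZMod.val_add, ← pow_eq_pow_mod _ hg, pow_add]

theorem pow_zmod_val_pow (hg : g ^ n = 1) (a b : ZMod n) :
    (g ^ a.val) ^ b.val = g ^ (a * b).val := by
  rw [ZMod.val_mul, ← pow_eq_pow_mod _ hg, pow_mul]

end ZModExponent

theorem elgamal_zero_test_correct_general {G : Type*} [CommGroup G] [Fintype G]
    (r : ℕ) (hcard : Fintype.card G = r) (g : G)
    (hgen : Function.Bijective fun t : ZMod r => g ^ t.val)
    (u : ZMod r) (t m : ZMod r) :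
    g ^ m.val * (g ^ u.val) ^ t.val = (g ^ t.val) ^ u.val ↔ m = 0 := by
  have : NeZero r := ⟨hcard ▸ Fintype.card_ne_zero⟩
  have hg : g ^ r = 1 := hcard ▸ pow_card_eq_one
  rw [pow_zmod_val_pow hg, pow_zmod_val_pow hg, ← pow_zmod_val_add hg, mul_comm u t,
    hgen.injective.eq_iff, add_eq_right]

/-- Correctness of the ElGamal zero-test: the ciphertext
`(R, C) = (g ^ t, g ^ m * U ^ t)` satisfies `C = R ^ u` iff `m = 0`. -/
theorem elgamal_zero_test_correct {G : Type*} [CommGroup G] [Fintype G]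
    (r : ℕ) (hr : r.Prime) (hcard : Fintype.card G = r) (g : G)
    (hgen : Function.Bijective fun t : ZMod r => g ^ t.val)
    (u : ZMod r) (t m : ZMod r) :
    g ^ m.val * (g ^ u.val) ^ t.val = (g ^ t.val) ^ u.val ↔ m = 0 :=
  elgamal_zero_test_correct_general r hcard g hgen u t m
end

section
/- A blinded nonzero-plaintext ElGamal ciphertext reveals nothing beyond the zero-test: let t be drawn from the uniform probability mass function on ZMod r, and independently let m be drawn from the uniform probability mass function on the nonzero elements of ZMod r. Then the pair (g^t, g^m * U^t) is uniformly distributed over the set {(R, C) ∈ G × G : C ≠ R^u}, i.e. over the set of all ciphertexts whose plaintext is nonzero, a set of cardinality r * (r - 1). -/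
/-!
Write `e t = g ^ t`. Since `U ^ t = (g ^ t) ^ u`, the ciphertext of `m` under randomness `t` is
`(e t, e m * (e t) ^ u)`. As `e` is a bijection with `e 0 = 1`, the map
`(t, m) ↦ (e t, e m * (e t) ^ u)` is a bijection `ZMod r × ZMod r → G × G`, under which `m ≠ 0`
corresponds exactly to `C ≠ R ^ u`. The distribution in question is the pushforward
of the uniform distribution on `ZMod r × {m | m ≠ 0}` under this injective map, hence uniform on
its image.
-/

open Finset

namespace PMF

variable {α β γ : Type*}

theorem map_apply_of_injective {f : α → β} (hf : Function.Injective f) (p : PMF α) (a : α) :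
    p.map f (f a) = p a := by
  rw [map_apply, tsum_eq_single a]
  · simp
  · intro a' ha'
    simp [hf.ne_iff.mpr (Ne.symm ha')]

theorem map_apply_of_notMem_range {f : α → β} (p : PMF α) {b : β} (hb : b ∉ Set.range f) :
    p.map f b = 0 := by
  rw [apply_eq_zero_iff, support_map]
  rintro ⟨a, -, rfl⟩
  exact hb ⟨a, rfl⟩

theorem map_uniformOfFinset_of_injective [DecidableEq β] {f : α → β} (hf : Function.Injective f)
    (s : Finset α) (hs : s.Nonempty) :
    (uniformOfFinset s hs).map f = uniformOfFinset (s.image f) (hs.image f) := by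
  ext b
  by_cases hb : b ∈ Set.range f
  · obtain ⟨a, rfl⟩ := hb
    rw [map_apply_of_injective hf]
    by_cases ha : a ∈ s
    · rw [uniformOfFinset_apply_of_mem hs ha, uniformOfFinset_apply_of_mem _ (mem_image_of_mem f ha),
        card_image_of_injective _ hf]
    · rw [uniformOfFinset_apply_of_notMem hs ha,
        uniformOfFinset_apply_of_notMem _ (hf.mem_finset_image.not.mpr ha)]
  · rw [map_apply_of_notMem_range _ hb, uniformOfFinset_apply_of_notMem _]
    simp only [mem_image, not_exists, not_and]
    exact fun a _ h => hb ⟨a, h⟩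

theorem uniformOfFintype_bind_map_prodMk [Fintype α] [Nonempty α] (s : Finset β)
    (hs : s.Nonempty) :
    (uniformOfFintype α).bind (fun a => (uniformOfFinset s hs).map (Prod.mk a)) =
      uniformOfFinset (univ ×ˢ s) (univ_nonempty.product hs) := by
  ext ⟨a, b⟩
  rw [bind_apply, tsum_eq_single a, map_apply_of_injective (Prod.mk_right_injective a),
    uniformOfFintype_apply]
  · by_cases hb : b ∈ s
    · rw [uniformOfFinset_apply_of_mem hs hb, uniformOfFinset_apply_of_mem _ (by simpa using hb),
        card_product, card_univ, Nat.cast_mul,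
        ENNReal.mul_inv (Or.inr (ENNReal.natCast_ne_top _)) (Or.inl (ENNReal.natCast_ne_top _))]
    · rw [uniformOfFinset_apply_of_notMem hs hb, uniformOfFinset_apply_of_notMem _ (by simpa using hb),
        mul_zero]
  · intro a' ha'
    rw [map_apply_of_notMem_range _ (by simpa using ha'), mul_zero]

theorem uniformOfFintype_bind_map_uniformOfFinset [Fintype α] [Nonempty α] [DecidableEq γ]
    (s : Finset β) (hs : s.Nonempty) {φ : α × β → γ} (hφ : Function.Injective φ) :
    (uniformOfFintype α).bind (fun a => (uniformOfFinset s hs).map fun b => φ (a, b)) =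
      uniformOfFinset ((univ ×ˢ s).image φ) ((univ_nonempty.product hs).image φ) := by
  rw [← map_uniformOfFinset_of_injective hφ _ (univ_nonempty.product hs), ← uniformOfFintype_bind_map_prodMk s hs, map_bind]
  simp only [map_comp]
  rfl

end PMF

section Encrypt

variable {α G : Type*} [Group G]

def encrypt (e : α → G) (f : G → G) (x : α × α) : G × G :=
  (e x.1, e x.2 * f (e x.1))

variable {e : α → G} (f : G → G)

theorem encrypt_injective (he : Function.Injective e) : Function.Injective (encrypt e f) := by
  rintro ⟨t, m⟩ ⟨t', m'⟩ h
  obtain ⟨ht, hm⟩ := Prod.mk.inj h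
  obtain rfl : t = t' := he ht
  obtain rfl : m = m' := he (mul_right_cancel hm)
  rfl

theorem image_encrypt_compl_singleton [Fintype α] [DecidableEq α] [Fintype G] [DecidableEq G]
    (he : Function.Bijective e) {a₀ : α} (h₀ : e a₀ = 1) :
    (univ ×ˢ {a₀}ᶜ).image (encrypt e f) = univ.filter fun p : G × G => p.2 ≠ f p.1 := by
  ext ⟨R, C⟩
  simp only [mem_image, mem_product, mem_univ, mem_compl, mem_singleton, true_and, mem_filter,
    encrypt, Prod.exists, Prod.mk.injEq]
  constructor
  · rintro ⟨t, m, hm, rfl, rfl⟩ h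
    exact hm (he.1 (h₀ ▸ mul_eq_right.mp h))
  · intro hC
    obtain ⟨t, rfl⟩ := he.2 R
    obtain ⟨m, hm⟩ := he.2 (C * (f (e t))⁻¹)
    refine ⟨t, m, ?_, rfl, by rw [hm, inv_mul_cancel_right]⟩
    rintro rfl
    exact hC (by rwa [h₀, eq_comm, mul_inv_eq_one] at hm)

end Encrypt

/-- A blinded nonzero-plaintext ElGamal ciphertext reveals nothing beyond the
zero-test: if `t` is uniform on `ZMod r` and, independently, `m` is uniform on
the nonzero elements of `ZMod r`, then `(g ^ t, g ^ m * U ^ t)` is uniformly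
distributed over `{(R, C) : C ≠ R ^ u}`, a set of cardinality `r * (r - 1)`. -/
theorem elgamal_blinded_nonzero_uniform {G : Type*} [CommGroup G] [Fintype G]
    [DecidableEq G] (r : ℕ) [Fact r.Prime] (g : G)
    (hgen : Function.Bijective fun t : ZMod r => g ^ t.val)
    (u : ZMod r) :
    (Finset.univ.filter fun p : G × G => p.2 ≠ p.1 ^ u.val).card = r * (r - 1) ∧
      ∀ p : G × G,
        ((PMF.uniformOfFintype (ZMod r)).bind fun t : ZMod r =>
            PMF.map (fun m : ZMod r => (g ^ t.val, g ^ m.val * (g ^ u.val) ^ t.val))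
              (PMF.uniformOfFinset ({(0 : ZMod r)}ᶜ : Finset (ZMod r)) ⟨1, by simp⟩)) p =
          if p.2 ≠ p.1 ^ u.val then 1 / ((r * (r - 1) : ℕ) : ENNReal) else 0 := by
  have hinj := encrypt_injective (· ^ u.val) hgen.1
  have himage := image_encrypt_compl_singleton (· ^ u.val) hgen (a₀ := 0) (by simp)
  have hcard : (univ.filter fun p : G × G => p.2 ≠ p.1 ^ u.val).card = r * (r - 1) := by
    rw [← himage, card_image_of_injective _ hinj, card_product, card_univ, card_compl,
      card_singleton, ZMod.card]
  have hdist := PMF.uniformOfFintype_bind_map_uniformOfFinset ({0}ᶜ : Finset (ZMod r))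
    ⟨1, by simp⟩ hinj
  simp only [encrypt] at hdist
  refine ⟨hcard, fun p => ?_⟩
  simp_rw [pow_right_comm g u.val]
  rw [hdist, PMF.uniformOfFinset_apply, himage, hcard]
  simp
end

section
/- Plaintext-level correctness of the cuckoo-filter private membership test: (there exist i : Fin b and j : Fin 2 with R i j = 0) if and only if (there exists i : Fin b such that X i i₁ = f or X i i₂ = f). That is, the masked response contains a zero entry exactly when the fingerprint f appears in one of the two queried buckets of the cuckoo filter. -/
namespace Matrix

variable {l m n α : Type*}

theorem mul_apply_eq_of_col_eq_indicator [Fintype m] [DecidableEq m] [NonAssocSemiring α]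
    (X : Matrix l m α) {Q : Matrix m n α} {j : n} {k : m}
    (hQ : ∀ i, Q i j = if i = k then 1 else 0) (i : l) :
    (X * Q) i j = X i k := by
  simp [mul_apply, hQ]

theorem hadamard_apply_eq_zero_iff [MulZeroClass α] [NoZeroDivisors α]
    {M A : Matrix m n α} {i : m} {j : n} (hM : M i j ≠ 0) :
    M.hadamard A i j = 0 ↔ A i j = 0 := by
  simp [hadamard_apply, hM]

end Matrix

theorem cuckoo_pmt_plaintext_correct_general (r : ℕ) (hr : r.Prime) (b β : ℕ)
    (X : Matrix (Fin b) (Fin β) (ZMod r)) (f : ZMod r) (i₁ i₂ : Fin β)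
    (Q : Matrix (Fin β) (Fin 2) (ZMod r))
    (hQ0 : ∀ i : Fin β, Q i 0 = if i = i₁ then 1 else 0)
    (hQ1 : ∀ i : Fin β, Q i 1 = if i = i₂ then 1 else 0)
    (M : Matrix (Fin b) (Fin 2) (ZMod r)) (hM : ∀ i j, M i j ≠ 0)
    (R : Matrix (Fin b) (Fin 2) (ZMod r))
    (hR : R = M.hadamard (X * Q - f • (Matrix.of fun _ _ => (1 : ZMod r) : Matrix (Fin b) (Fin 2) (ZMod r)))) :
    (∃ i : Fin b, ∃ j : Fin 2, R i j = 0) ↔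
      ∃ i : Fin b, X i i₁ = f ∨ X i i₂ = f := by
  -- `ZMod r` is a field, so the nonzero mask `M` neither creates nor destroys zeros.
  have : Fact r.Prime := ⟨hr⟩
  have hR_eq_zero : ∀ i j, R i j = 0 ↔ (X * Q) i j = f := fun i j => by
    rw [hR, Matrix.hadamard_apply_eq_zero_iff (hM i j)]
    simp [sub_eq_zero]
  simp only [hR_eq_zero, Fin.exists_fin_two, Matrix.mul_apply_eq_of_col_eq_indicator X hQ0,
    Matrix.mul_apply_eq_of_col_eq_indicator X hQ1]

/-- Plaintext-level correctness of the cuckoo-filter private membership test: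
with `R = M ⊙ (X ⬝ Q - f • J)` (entrywise mask `M` with nonzero entries,
all-ones matrix `J`), some entry of `R` is zero iff the fingerprint `f`
appears in one of the two queried buckets of the cuckoo filter `X`. -/
theorem cuckoo_pmt_plaintext_correct (r : ℕ) (hr : r.Prime) (b β : ℕ)
    (hb : 0 < b) (hβ : 0 < β)
    (X : Matrix (Fin b) (Fin β) (ZMod r)) (f : ZMod r) (i₁ i₂ : Fin β)
    (Q : Matrix (Fin β) (Fin 2) (ZMod r))
    (hQ0 : ∀ i : Fin β, Q i 0 = if i = i₁ then 1 else 0)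
    (hQ1 : ∀ i : Fin β, Q i 1 = if i = i₂ then 1 else 0)
    (M : Matrix (Fin b) (Fin 2) (ZMod r)) (hM : ∀ i j, M i j ≠ 0)
    (R : Matrix (Fin b) (Fin 2) (ZMod r))
    (hR : R = M.hadamard (X * Q - f • (Matrix.of fun _ _ => (1 : ZMod r) : Matrix (Fin b) (Fin 2) (ZMod r)))) :
    (∃ i : Fin b, ∃ j : Fin 2, R i j = 0) ↔
      ∃ i : Fin b, X i i₁ = f ∨ X i i₂ = f :=
  cuckoo_pmt_plaintext_correct_general r hr b β X f i₁ i₂ Q hQ0 hQ1 M hM R hR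
end

section
/- Lower bound on the expected number of queries to extract a uniformly random fingerprint: let S be a nonempty finite set of cardinality N, let F be drawn from the uniform probability mass function on S, and let A₁, A₂, … be a sequence of finite subsets of S, each of cardinality at most c ≥ 1, whose union is all of S. Define T to be the least index q ≥ 1 such that F ∈ A₁ ∪ ⋯ ∪ A_q. Then the expected value of T is at least N / (2c). -/
/-!
Only `c * k` elements can be tested within the first `k` queries, so `#{y | T y ≤ T x} ≤ c * T x`
for every `x`. Summing over `x` counts the ordered pairs `(x, y)` with `T y ≤ T x`; every pair is
counted in at least one of its two orders, so `N ^ 2 ≤ 2 * c * ∑ x, T x`.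
-/

open Finset

theorem card_filter_le_le_mul {α : Type*} (s : Finset α) (f : α → ℕ) (c : ℕ)
    (A : ℕ → Finset α) (hAc : ∀ i, #(A i) ≤ c)
    (hf : ∀ x ∈ s, ∃ i ∈ Icc 1 (f x), x ∈ A i) (k : ℕ) :
    #{x ∈ s | f x ≤ k} ≤ k * c := by
  classical
  have hsub : {x ∈ s | f x ≤ k} ⊆ (Icc 1 k).biUnion A := by
    intro x hx
    rw [mem_filter] at hx
    obtain ⟨i, hi, hxi⟩ := hf x hx.1
    exact mem_biUnion.2 ⟨i, Icc_subset_Icc_right hx.2 hi, hxi⟩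
  calc #{x ∈ s | f x ≤ k} ≤ #((Icc 1 k).biUnion A) := card_le_card hsub
    _ ≤ ∑ i ∈ Icc 1 k, #(A i) := card_biUnion_le
    _ ≤ ∑ _i ∈ Icc 1 k, c := sum_le_sum fun i _ => hAc i
    _ = k * c := by simp

theorem sq_card_le_two_mul_card_filter_le {α β : Type*} [LinearOrder β]
    (s : Finset α) (f : α → β) :
    #s ^ 2 ≤ 2 * #{p ∈ s ×ˢ s | f p.2 ≤ f p.1} := by
  classical
  set P := {p ∈ s ×ˢ s | f p.2 ≤ f p.1}
  have hcover : s ×ˢ s ⊆ P ∪ P.image Prod.swap := by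
    rintro ⟨x, y⟩ hxy
    rcases le_total (f y) (f x) with h | h
    · exact mem_union_left _ (mem_filter.2 ⟨hxy, h⟩)
    · refine mem_union_right _ (mem_image.2 ⟨(y, x), mem_filter.2 ⟨?_, h⟩, rfl⟩)
      simpa [and_comm] using hxy
  calc #s ^ 2 = #(s ×ˢ s) := by rw [card_product, sq]
    _ ≤ #(P ∪ P.image Prod.swap) := card_le_card hcover
    _ ≤ #P + #(P.image Prod.swap) := card_union_le _ _
    _ ≤ 2 * #P := by linarith [card_image_le (s := P) (f := Prod.swap)]

theorem sq_card_le_two_mul_sum {α : Type*} (s : Finset α) (f : α → ℕ) (c : ℕ)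
    (hf : ∀ k, #{x ∈ s | f x ≤ k} ≤ k * c) :
    #s ^ 2 ≤ 2 * c * ∑ x ∈ s, f x := by
  have hpairs : #{p ∈ s ×ˢ s | f p.2 ≤ f p.1} = ∑ x ∈ s, #{y ∈ s | f y ≤ f x} := by
    rw [card_filter, sum_product]
    exact sum_congr rfl fun x _ => (card_filter _ _).symm
  calc #s ^ 2 ≤ 2 * #{p ∈ s ×ˢ s | f p.2 ≤ f p.1} := sq_card_le_two_mul_card_filter_le s f
    _ ≤ 2 * ∑ x ∈ s, f x * c := by rw [hpairs]; gcongr with x; exact hf (f x)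
    _ = 2 * c * ∑ x ∈ s, f x := by rw [← sum_mul]; ring

theorem div_two_mul_le_div_of_sq_le {N c S : ℝ} (hN : 0 ≤ N) (hc : 0 ≤ c) (hS : 0 ≤ S)
    (h : N ^ 2 ≤ 2 * c * S) : N / (2 * c) ≤ S / N := by
  rcases hN.eq_or_lt with rfl | hN
  · simp
  rcases hc.eq_or_lt with rfl | hc
  · simpa using div_nonneg hS hN.le
  rw [div_le_div_iff₀ (by positivity) hN]
  nlinarith

theorem extraction_expected_queries_lower_bound_general {α : Type*}
    (S : Finset α) (c : ℕ)
    (A : ℕ → Finset α) (hAc : ∀ q, (A q).card ≤ c)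
    (T : α → ℕ)
    (hT : ∀ x ∈ S,
      IsLeast {q : ℕ | 1 ≤ q ∧ ∃ i ∈ Finset.Icc 1 q, x ∈ A i} (T x)) :
    (S.card : ℝ) / (2 * c) ≤ (∑ x ∈ S, (T x : ℝ)) / S.card := by
  have hcount := card_filter_le_le_mul S T c A hAc fun x hx => (hT x hx).1.2
  have hsq : ((#S : ℕ) : ℝ) ^ 2 ≤ 2 * c * ∑ x ∈ S, (T x : ℝ) := by
    exact_mod_cast sq_card_le_two_mul_sum S T c hcount
  exact div_two_mul_le_div_of_sq_le (by positivity) (by positivity) (by positivity) hsq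

/-- Lower bound on the expected number of queries to extract a uniformly
random fingerprint: if `F` is uniform on a nonempty finite set `S` of
cardinality `N`, the sets `A 1, A 2, …` are subsets of `S` of cardinality at
most `c ≥ 1` covering all of `S`, and `T x` is the least `q ≥ 1` such that
`x ∈ A 1 ∪ ⋯ ∪ A q`, then the expected value of `T` under the uniform
distribution, namely `(∑ x ∈ S, T x) / N`, is at least `N / (2 * c)`. -/
theorem extraction_expected_queries_lower_bound {α : Type*}
    (S : Finset α) (hS : S.Nonempty) (c : ℕ) (hc : 1 ≤ c)
    (A : ℕ → Finset α) (hA : ∀ q, A q ⊆ S) (hAc : ∀ q, (A q).card ≤ c)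
    (hcover : ∀ x ∈ S, ∃ q, 1 ≤ q ∧ x ∈ A q)
    (T : α → ℕ)
    (hT : ∀ x ∈ S,
      IsLeast {q : ℕ | 1 ≤ q ∧ ∃ i ∈ Finset.Icc 1 q, x ∈ A i} (T x)) :
    (S.card : ℝ) / (2 * c) ≤ (∑ x ∈ S, (T x : ℝ)) / S.card :=
  extraction_expected_queries_lower_bound_general S c A hAc T hT
end
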